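/- Let ω : [0,1] → ℝ be nonnegative and non-increasing, N > 2, h = 1/N, B_N ρ = Σ_{i=0}^{N-1} ρ_i ∫_{ih}^{(i+1)h} ω(s)ds, and y = h^{-1}(ρ^{(1)} - ρ). Then |2 B_N ρ^{(1)} - B_N ρ - B_N ρ^{(2)}| ≤ 2 h² ω(0) ‖y‖_∞ for all ρ ∈ ℝ^N, where ρ^{(2)} = (ρ^{(1)})^{(1)}. -/

import Mathlib

/-!
Since `2ρ⁽¹⁾ - ρ - ρ⁽²⁾ = h (y - y⁽¹⁾)`, the quantity to bound is `h ∑ᵢ (yᵢ - yᵢ₊₁) Iᵢ` with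
`Iᵢ = ∫_{ih}^{(i+1)h} ω` and indices mod `N`. Summation by parts turns this into
`h ∑ᵢ yᵢ (Iᵢ - Iᵢ₋₁)`. The cell integrals of the non-increasing `ω` are non-increasing in `i`, so
the cyclic differences have total variation `2 (I₀ - I_{N-1}) ≤ 2 I₀ ≤ 2 h ω(0)`.
-/

open intervalIntegral Set Finset

section CyclicSummationByParts

variable (n : ℕ) (y a : ℕ → ℝ)

theorem sum_cyclic_diff_mul_eq :
    ∑ i ∈ range (n + 1), (y i - y ((i + 1) % (n + 1))) * a i =
      y 0 * (a 0 - a n) + ∑ i ∈ range n, y (i + 1) * (a (i + 1) - a i) := by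
  have hwrap : ∑ i ∈ range (n + 1), y ((i + 1) % (n + 1)) * a i =
      ∑ i ∈ range n, y (i + 1) * a i + y 0 * a n := by
    rw [sum_range_succ, Nat.mod_self]
    congr 1
    exact sum_congr rfl fun i hi => by rw [Nat.mod_eq_of_lt (by simpa using hi)]
  simp only [sub_mul, sum_sub_distrib, mul_sub, hwrap, sum_range_succ' (fun i => y i * a i)]
  ring

variable {n y a}

theorem abs_sum_cyclic_diff_mul_le {Y : ℝ} (ha : ∀ i < n, a (i + 1) ≤ a i)
    (hY : ∀ i ≤ n, |y i| ≤ Y) :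
    |∑ i ∈ range (n + 1), (y i - y ((i + 1) % (n + 1))) * a i| ≤ 2 * Y * (a 0 - a n) := by
  have htele : ∑ i ∈ range n, (a i - a (i + 1)) = a 0 - a n := sum_range_sub' a n
  have hdrop : 0 ≤ a 0 - a n := by
    rw [← htele]; exact sum_nonneg fun i hi => sub_nonneg.2 (ha i (mem_range.1 hi))
  have hinner : |∑ i ∈ range n, y (i + 1) * (a (i + 1) - a i)| ≤ Y * (a 0 - a n) :=
    calc |∑ i ∈ range n, y (i + 1) * (a (i + 1) - a i)|
        ≤ ∑ i ∈ range n, |y (i + 1)| * |a (i + 1) - a i| := by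
          simpa only [abs_mul] using
            abs_sum_le_sum_abs (fun i => y (i + 1) * (a (i + 1) - a i)) (range n)
      _ ≤ ∑ i ∈ range n, Y * (a i - a (i + 1)) := by
          refine sum_le_sum fun i hi => ?_
          have hi := mem_range.1 hi
          rw [abs_of_nonpos (sub_nonpos.2 (ha i hi)), neg_sub]
          exact mul_le_mul_of_nonneg_right (hY (i + 1) hi) (sub_nonneg.2 (ha i hi))
      _ = Y * (a 0 - a n) := by rw [← mul_sum, htele]
  have hfirst : |y 0 * (a 0 - a n)| ≤ Y * (a 0 - a n) := by
    rw [abs_mul, abs_of_nonneg hdrop]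
    exact mul_le_mul_of_nonneg_right (hY 0 n.zero_le) hdrop
  rw [sum_cyclic_diff_mul_eq]
  linarith [abs_add_le (y 0 * (a 0 - a n)) (∑ i ∈ range n, y (i + 1) * (a (i + 1) - a i))]

end CyclicSummationByParts

section AntitoneIntegrals

variable {f : ℝ → ℝ} {a b c : ℝ}

theorem integral_add_le_integral_of_antitoneOn (hf : AntitoneOn f (Icc a (b + c)))
    (hab : a ≤ b) (hc : 0 ≤ c) : ∫ x in (a + c)..(b + c), f x ≤ ∫ x in a..b, f x := by
  have hsub : Icc a b ⊆ Icc a (b + c) := Icc_subset_Icc le_rfl (by linarith)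
  have hshift : uIcc (a + c) (b + c) ⊆ Icc a (b + c) := by
    rw [Set.uIcc_of_le (by linarith)]; exact Icc_subset_Icc (by linarith) le_rfl
  rw [← integral_comp_add_right]
  refine integral_mono_on hab ?_ (hf.mono (Set.uIcc_of_le hab ▸ hsub)).intervalIntegrable
    fun x hx => ?_
  · simpa using (hf.mono hshift).intervalIntegrable.comp_add_right c
  · exact hf (hsub hx) ⟨by linarith [hx.1], by linarith [hx.2]⟩ (by linarith)

theorem integral_le_mul_of_antitoneOn (hf : AntitoneOn f (Icc a b)) (hab : a ≤ b) :
    ∫ x in a..b, f x ≤ (b - a) * f a := by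
  calc ∫ x in a..b, f x ≤ ∫ _ in a..b, f a :=
        integral_mono_on hab (hf.mono (Set.uIcc_of_le hab).subset).intervalIntegrable
          intervalIntegrable_const
          fun x hx => hf (left_mem_Icc.2 hab) hx hx.1
    _ = (b - a) * f a := by rw [integral_const, smul_eq_mul]

end AntitoneIntegrals

section CellIntegrals

noncomputable def cellIntegral (ω : ℝ → ℝ) (h : ℝ) (i : ℕ) : ℝ :=
  ∫ s in ((i : ℝ) * h)..(((i : ℝ) + 1) * h), ω s

variable {ω : ℝ → ℝ} {h : ℝ}

theorem cellIntegral_nonneg (hω : ∀ s ∈ Icc (0 : ℝ) 1, 0 ≤ ω s) (hh : 0 ≤ h) {i : ℕ}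
    (hi : ((i : ℝ) + 1) * h ≤ 1) : 0 ≤ cellIntegral ω h i :=
  integral_nonneg (by nlinarith) fun s hs =>
    hω s ⟨(by positivity : (0 : ℝ) ≤ i * h).trans hs.1, hs.2.trans hi⟩

theorem cellIntegral_succ_le (hω : AntitoneOn ω (Icc 0 1)) (hh : 0 ≤ h) {i : ℕ}
    (hi : ((i : ℝ) + 2) * h ≤ 1) : cellIntegral ω h (i + 1) ≤ cellIntegral ω h i := by
  have hmono := integral_add_le_integral_of_antitoneOn (a := i * h) (b := (i + 1) * h) (c := h)
    (hω.mono (Icc_subset_Icc (by positivity) (by linarith))) (by nlinarith) hh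
  unfold cellIntegral
  convert hmono using 2 <;> push_cast <;> ring

theorem cellIntegral_zero_le (hω : AntitoneOn ω (Icc 0 1)) (hh : 0 ≤ h) (h1 : h ≤ 1) :
    cellIntegral ω h 0 ≤ h * ω 0 := by
  simpa [cellIntegral] using
    integral_le_mul_of_antitoneOn (hω.mono (Icc_subset_Icc le_rfl h1)) hh

end CellIntegrals

theorem two_mul_shift_sub_sub_shift_two {N : ℕ} {h : ℝ} (hh : h ≠ 0) {ρ ρ1 ρ2 y : ℕ → ℝ}
    (hρ1 : ∀ i, ρ1 i = ρ ((i + 1) % N)) (hρ2 : ∀ i, ρ2 i = ρ ((i + 2) % N))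
    (hy : ∀ i, y i = h⁻¹ * (ρ1 i - ρ i)) (i : ℕ) :
    2 * ρ1 i - ρ i - ρ2 i = h * (y i - y ((i + 1) % N)) := by
  have hshift : ρ1 ((i + 1) % N) = ρ2 i := by rw [hρ1, hρ2, Nat.mod_add_mod]
  rw [hy, hy, hshift, ← hρ1, mul_sub, mul_inv_cancel_left₀ hh, mul_inv_cancel_left₀ hh]
  ring

/-- Second shift-difference estimate for the discrete convolution `B_N`. -/
theorem BN_second_shift_difference_bound (ω : ℝ → ℝ)
    (hω0 : ∀ s ∈ Set.Icc (0:ℝ) 1, 0 ≤ ω s)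
    (hmono : ∀ s t : ℝ, 0 ≤ s → s ≤ t → t ≤ 1 → ω t ≤ ω s)
    (N : ℕ) (hN : 2 < N) (h : ℝ) (hh : h = 1 / N)
    (ρ : ℕ → ℝ)
    (B : (ℕ → ℝ) → ℝ)
    (hB : ∀ r : ℕ → ℝ, B r =
      ∑ i ∈ Finset.range N, r i * ∫ s in ((i : ℝ) * h)..(((i : ℝ) + 1) * h), ω s)
    (ρ1 ρ2 y : ℕ → ℝ)
    (hρ1 : ∀ i, ρ1 i = ρ ((i + 1) % N)) (hρ2 : ∀ i, ρ2 i = ρ ((i + 2) % N))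
    (hy : ∀ i, y i = h⁻¹ * (ρ1 i - ρ i))
    (Y : ℝ) (hY : ∀ i, i < N → |y i| ≤ Y) :
    |2 * B ρ1 - B ρ - B ρ2| ≤ 2 * h ^ 2 * ω 0 * Y := by
  obtain ⟨n, rfl⟩ : ∃ n, N = n + 1 := ⟨N - 1, by omega⟩
  have hh0 : 0 < h := by rw [hh]; positivity
  have hcell (k : ℕ) (hk : k ≤ n + 1) : (k : ℝ) * h ≤ 1 := by
    rw [hh, mul_one_div, div_le_one (by positivity)]
    exact_mod_cast hk
  have hanti : AntitoneOn ω (Icc 0 1) := fun s hs t ht hst => hmono s t hs.1 hst ht.2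
  have hdiff : 2 * B ρ1 - B ρ - B ρ2 =
      h * ∑ i ∈ range (n + 1), (y i - y ((i + 1) % (n + 1))) * cellIntegral ω h i := by
    have hBcell (r : ℕ → ℝ) : B r = ∑ i ∈ range (n + 1), r i * cellIntegral ω h i := hB r
    simp only [hBcell, mul_sum, ← sum_sub_distrib]
    refine sum_congr rfl fun i _ => ?_
    linear_combination cellIntegral ω h i * two_mul_shift_sub_sub_shift_two hh0.ne' hρ1 hρ2 hy i
  have hvar := abs_sum_cyclic_diff_mul_le (n := n) (a := cellIntegral ω h) (y := y)
    (fun i hi => cellIntegral_succ_le hanti hh0.le (by simpa using hcell (i + 2) (by omega)))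
    (fun i hi => hY i (by omega))
  have hfirst := cellIntegral_zero_le hanti hh0.le (by simpa using hcell 1 (by omega))
  have hlast := cellIntegral_nonneg hω0 hh0.le (by simpa using hcell (n + 1) le_rfl)
  have hY0 : 0 ≤ Y := (abs_nonneg _).trans (hY 0 (by omega))
  calc |2 * B ρ1 - B ρ - B ρ2|
      = h * |∑ i ∈ range (n + 1), (y i - y ((i + 1) % (n + 1))) * cellIntegral ω h i| := by
        rw [hdiff, abs_mul, abs_of_pos hh0]
    _ ≤ h * (2 * Y * (cellIntegral ω h 0 - cellIntegral ω h n)) := by gcongr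
    _ ≤ h * (2 * Y * (h * ω 0)) := by gcongr; linarith
    _ = 2 * h ^ 2 * ω 0 * Y := by ring
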